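/- In any reduced SCM, the joint observational distribution factorizes over c-components: for every x, y, z, s ∈ {0,1} such that P(S = s, X = x) > 0 and P(X = x, Z = z) > 0, P(X = x, Y = y, Z = z, S = s) = P(S = s) · P(X = x) · P(Z = z | S = s, X = x) · P(Y = y | X = x, Z = z). -/

import Mathlib

open Finset

attribute [local instance] Classical.propDecidable

/-- A reduced SCM as in the paper: exogenous `U1`, `U2`, a parameter `γ` for the
binary pre-treatment variable `S`, and mechanisms `fX`, `fZ`, `fY`. -/
structure ReducedSCM (U1 U2 : Type) [Fintype U1] [Fintype U2] where
  p1 : U1 → ℝ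
  p2 : U2 → ℝ
  gamma : ℝ
  p1_nonneg : ∀ u, 0 ≤ p1 u
  p2_nonneg : ∀ u, 0 ≤ p2 u
  p1_sum : ∑ u, p1 u = 1
  p2_sum : ∑ u, p2 u = 1
  gamma_nonneg : 0 ≤ gamma
  gamma_le_one : gamma ≤ 1
  fX : U1 → Bool
  fZ : Bool → Bool → U2 → Bool
  fY : Bool → U1 → Bool

namespace ReducedSCM

variable {U1 U2 : Type} [Fintype U1] [Fintype U2]

/-- Probability of a unit `(u1, u2, s)`. -/
def w (M : ReducedSCM U1 U2) (u : U1 × U2 × Bool) : ℝ :=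
  M.p1 u.1 * M.p2 u.2.1 * (if u.2.2 then M.gamma else 1 - M.gamma)

/-- Probability of an event. -/
noncomputable def P (M : ReducedSCM U1 U2) (E : U1 × U2 × Bool → Prop) : ℝ :=
  ∑ u, if E u then M.w u else 0

/-- Conditional probability `P(A | B)`. -/
noncomputable def Pcond (M : ReducedSCM U1 U2) (A B : U1 × U2 × Bool → Prop) : ℝ :=
  M.P (fun u => A u ∧ B u) / M.P B

def S (_M : ReducedSCM U1 U2) (u : U1 × U2 × Bool) : Bool := u.2.2

def X (M : ReducedSCM U1 U2) (u : U1 × U2 × Bool) : Bool := M.fX u.1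

def Z (M : ReducedSCM U1 U2) (u : U1 × U2 × Bool) : Bool := M.fZ (M.S u) (M.X u) u.2.1

def Y (M : ReducedSCM U1 U2) (u : U1 × U2 × Bool) : Bool := M.fY (M.Z u) u.1

/-- Potential outcome `Y_{X=x}`. -/
def Yx (M : ReducedSCM U1 U2) (x : Bool) (u : U1 × U2 × Bool) : Bool :=
  M.fY (M.fZ (M.S u) x u.2.1) u.1

end ReducedSCM

/-!
The unit is a pair of independent components: `u1` drives `X` and `Y`, while `(u2, s)` drives
`S` and, once `X = x` is fixed, `Z`. Every event in the theorem splits as a `u1`-condition and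
a `(u2, s)`-condition, so its probability is the product of the two marginal probabilities
`P₁` and `P₂`. Then `P(Z = z | S = s, X = x)` and `P(Y = y | X = x, Z = z)` reduce to
`P₂(Z = z, S = s) / P₂(S = s)` and `P₁(X = x, Y = y) / P₁(X = x)`, and the factorization is
an identity between products of marginals.
-/

namespace ReducedSCM

variable {U1 U2 : Type} [Fintype U1] [Fintype U2] (M : ReducedSCM U1 U2)

noncomputable def P₁ (Q : U1 → Prop) : ℝ :=
  ∑ u1, if Q u1 then M.p1 u1 else 0

noncomputable def P₂ (R : U2 × Bool → Prop) : ℝ :=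
  ∑ v, if R v then M.p2 v.1 * (if v.2 then M.gamma else 1 - M.gamma) else 0

lemma P₁_true : M.P₁ (fun _ => True) = 1 := by
  simp [P₁, M.p1_sum]

lemma P₂_true : M.P₂ (fun _ => True) = 1 := by
  simp [P₂, Fintype.sum_prod_type, ← mul_add, M.p2_sum]

lemma P_eq_P₁_mul_P₂ {E : U1 × U2 × Bool → Prop} (Q : U1 → Prop) (R : U2 × Bool → Prop)
    (h : ∀ u, E u ↔ Q u.1 ∧ R u.2) : M.P E = M.P₁ Q * M.P₂ R := by
  rw [P, Fintype.sum_prod_type, P₁, P₂, Finset.sum_mul_sum]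
  refine Finset.sum_congr rfl fun u1 _ => Finset.sum_congr rfl fun v _ => ?_
  simp only [w, h]
  split_ifs <;> simp_all [mul_assoc]

end ReducedSCM

/-- In any reduced SCM the joint observational distribution
factorizes over c-components:
`P(X, Y, Z, S) = P(S) · P(X) · P(Z | S, X) · P(Y | X, Z)`. -/
theorem c_component_factorization {U1 U2 : Type} [Fintype U1] [Fintype U2]
    (M : ReducedSCM U1 U2) (x y z s : Bool)
    (hpos1 : 0 < M.P (fun u => M.S u = s ∧ M.X u = x))
    (hpos2 : 0 < M.P (fun u => M.X u = x ∧ M.Z u = z)) :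
    M.P (fun u => M.X u = x ∧ M.Y u = y ∧ M.Z u = z ∧ M.S u = s)
      = M.P (fun u => M.S u = s) * M.P (fun u => M.X u = x)
        * M.Pcond (fun u => M.Z u = z) (fun u => M.S u = s ∧ M.X u = x)
        * M.Pcond (fun u => M.Y u = y) (fun u => M.X u = x ∧ M.Z u = z) := by
  set qX := M.P₁ (fun u1 => M.fX u1 = x)
  set qXY := M.P₁ (fun u1 => M.fX u1 = x ∧ M.fY z u1 = y)
  set rZS := M.P₂ (fun v => M.fZ v.2 x v.1 = z ∧ v.2 = s)
  set rZ := M.P₂ (fun v => M.fZ v.2 x v.1 = z)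
  set rS := M.P₂ (fun v => v.2 = s)
  have hXYZS : M.P (fun u => M.X u = x ∧ M.Y u = y ∧ M.Z u = z ∧ M.S u = s) = qXY * rZS :=
    M.P_eq_P₁_mul_P₂ _ _ fun u => by
      grind [ReducedSCM.X, ReducedSCM.Y, ReducedSCM.Z, ReducedSCM.S]
  have hS : M.P (fun u => M.S u = s) = M.P₁ (fun _ => True) * rS :=
    M.P_eq_P₁_mul_P₂ _ _ fun u => by grind [ReducedSCM.S]
  have hX : M.P (fun u => M.X u = x) = qX * M.P₂ (fun _ => True) :=
    M.P_eq_P₁_mul_P₂ _ _ fun u => by grind [ReducedSCM.X]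
  have hSX : M.P (fun u => M.S u = s ∧ M.X u = x) = qX * rS :=
    M.P_eq_P₁_mul_P₂ _ _ fun u => by grind [ReducedSCM.X, ReducedSCM.S]
  have hZSX : M.P (fun u => M.Z u = z ∧ M.S u = s ∧ M.X u = x) = qX * rZS :=
    M.P_eq_P₁_mul_P₂ _ _ fun u => by grind [ReducedSCM.X, ReducedSCM.Z, ReducedSCM.S]
  have hXZ : M.P (fun u => M.X u = x ∧ M.Z u = z) = qX * rZ :=
    M.P_eq_P₁_mul_P₂ _ _ fun u => by grind [ReducedSCM.X, ReducedSCM.Z, ReducedSCM.S]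
  have hYXZ : M.P (fun u => M.Y u = y ∧ M.X u = x ∧ M.Z u = z) = qXY * rZ :=
    M.P_eq_P₁_mul_P₂ _ _ fun u => by
      grind [ReducedSCM.X, ReducedSCM.Y, ReducedSCM.Z, ReducedSCM.S]
  rw [hSX] at hpos1
  rw [hXZ] at hpos2
  have hqX : qX ≠ 0 := left_ne_zero_of_mul hpos1.ne'
  have hrS : rS ≠ 0 := right_ne_zero_of_mul hpos1.ne'
  have hrZ : rZ ≠ 0 := right_ne_zero_of_mul hpos2.ne'
  rw [ReducedSCM.Pcond, ReducedSCM.Pcond, hXYZS, hS, hX, hZSX, hSX, hYXZ, hXZ, M.P₁_true,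
    M.P₂_true]
  field_simp
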